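/- arXiv:2305.15812 — 3 statements merged into one kernel-verified Lean document; each statement's English description precedes it below -/
import Mathlib

section
/- With Υ as above, fix matrices C̃ₙ₊₁, C̃ₙ, Γₙ₊₁, Γₙ and set Γ_{n+1/2} = (Γₙ₊₁ + Γₙ)/2 and Q_alg2 = (S̃(C̃ₙ₊₁) + S̃(C̃ₙ))/2 − Ŝ₀ − μ(Γ_{n+1/2} − I). Then Υ(C̃ₙ₊₁, Γₙ₊₁) − Υ(C̃ₙ₊₁, Γ_{n+1/2}) + Υ(C̃ₙ, Γ_{n+1/2}) − Υ(C̃ₙ, Γₙ) = −(1/2) Q_alg2 : (Γₙ₊₁ − Γₙ). -/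
open Matrix

/-- Frobenius inner product `A : B = trace (Aᵀ B)`. -/
noncomputable def frob {n : ℕ} (A B : Matrix (Fin n) (Fin n) ℝ) : ℝ :=
  Matrix.trace (Aᵀ * B)

/-- The configurational free energy `Υ(C̃, Γ)`. -/
noncomputable def Upsilon {n : ℕ} (μ : ℝ) (St : Matrix (Fin n) (Fin n) ℝ → Matrix (Fin n) (Fin n) ℝ)
    (S0 : Matrix (Fin n) (Fin n) ℝ) (C Γ : Matrix (Fin n) (Fin n) ℝ) : ℝ :=
  μ * frob (((1 : ℝ)/2) • (Γ - 1)) (((1 : ℝ)/2) • (Γ - 1)) +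
    frob (S0 - St C) (((1 : ℝ)/2) • (Γ - 1)) +
    (1/(4*μ)) * frob (St C - S0) (St C - S0)

lemma frob_eq_sum {n : ℕ} (A B : Matrix (Fin n) (Fin n) ℝ) :
    frob A B = ∑ i, ∑ j, A i j * B i j := by
  rw [frob, Matrix.trace]
  simp [Matrix.diag, Matrix.mul_apply, Matrix.transpose_apply]
  exact Finset.sum_comm

theorem directionality_Qalg2 {n : ℕ} (μ : ℝ) (hμ : 0 < μ)
    (St : Matrix (Fin n) (Fin n) ℝ → Matrix (Fin n) (Fin n) ℝ)
    (S0 Cnp1 Cn Γnp1 Γn : Matrix (Fin n) (Fin n) ℝ)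
    (Γmid : Matrix (Fin n) (Fin n) ℝ) (hΓmid : Γmid = ((1 : ℝ)/2) • (Γnp1 + Γn))
    (Qalg2 : Matrix (Fin n) (Fin n) ℝ)
    (hQ : Qalg2 = ((1 : ℝ)/2) • (St Cnp1 + St Cn) - S0 - μ • (Γmid - 1)) :
    Upsilon μ St S0 Cnp1 Γnp1 - Upsilon μ St S0 Cnp1 Γmid +
      Upsilon μ St S0 Cn Γmid - Upsilon μ St S0 Cn Γn =
    -(1/2 : ℝ) * frob Qalg2 (Γnp1 - Γn) := by
  subst hΓmid hQ
  simp only [Upsilon, frob_eq_sum, Matrix.sub_apply, Matrix.add_apply, Matrix.smul_apply,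
    Matrix.one_apply, smul_eq_mul, Finset.mul_sum, ← Finset.sum_sub_distrib,
    ← Finset.sum_add_distrib, neg_mul, ← Finset.sum_neg_distrib]
  refine Finset.sum_congr rfl fun i _ => ?_
  refine Finset.sum_congr rfl fun j _ => ?_
  have h4 : μ ≠ 0 := hμ.ne'
  by_cases h : i = j <;> simp only [h, if_pos, if_neg, ite_true, ite_false] <;> field_simp <;> ring
end

section
/- Under the hypotheses of the previous statements, suppose additionally that the discrete constitutive relation Q_alg2 = η (Γₙ₊₁ − Γₙ)/Δt holds with Q_alg2 = (S̃(C̃ₙ₊₁) + S̃(C̃ₙ))/2 − Ŝ₀ − μ(Γ_{n+1/2} − I). Then Υ(C̃ₙ₊₁, Γₙ₊₁) − Υ(C̃ₙ₊₁, Γ_{n+1/2}) + Υ(C̃ₙ, Γ_{n+1/2}) − Υ(C̃ₙ, Γₙ) = −(Δt/2) η |(Γₙ₊₁ − Γₙ)/Δt|². -/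
open Matrix

lemma frob_add_left {n : ℕ} (A B C : Matrix (Fin n) (Fin n) ℝ) :
    frob (A + B) C = frob A C + frob B C := by
  simp [frob, Matrix.transpose_add, Matrix.add_mul]

lemma frob_add_right {n : ℕ} (A B C : Matrix (Fin n) (Fin n) ℝ) :
    frob A (B + C) = frob A B + frob A C := by
  simp [frob, Matrix.mul_add]

lemma frob_sub_left {n : ℕ} (A B C : Matrix (Fin n) (Fin n) ℝ) :
    frob (A - B) C = frob A C - frob B C := by
  simp [frob, Matrix.transpose_sub, Matrix.sub_mul]

lemma frob_sub_right {n : ℕ} (A B C : Matrix (Fin n) (Fin n) ℝ) :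
    frob A (B - C) = frob A B - frob A C := by
  simp [frob, Matrix.mul_sub]

lemma frob_smul_left {n : ℕ} (c : ℝ) (A B : Matrix (Fin n) (Fin n) ℝ) :
    frob (c • A) B = c * frob A B := by
  simp [frob, Matrix.transpose_smul, Matrix.smul_mul]

lemma frob_smul_right {n : ℕ} (c : ℝ) (A B : Matrix (Fin n) (Fin n) ℝ) :
    frob A (c • B) = c * frob A B := by
  simp [frob, Matrix.mul_smul]

lemma frob_comm {n : ℕ} (A B : Matrix (Fin n) (Fin n) ℝ) :
    frob A B = frob B A := by
  rw [frob, frob, ← Matrix.trace_transpose (Aᵀ * B)]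
  simp [Matrix.transpose_mul]

theorem discrete_dissipation_identity {n : ℕ} (μ η Δt : ℝ)
    (hμ : 0 < μ) (hη : 0 < η) (hΔt : 0 < Δt)
    (St : Matrix (Fin n) (Fin n) ℝ → Matrix (Fin n) (Fin n) ℝ)
    (S0 Cnp1 Cn Γnp1 Γn : Matrix (Fin n) (Fin n) ℝ)
    (Γmid : Matrix (Fin n) (Fin n) ℝ) (hΓmid : Γmid = ((1 : ℝ)/2) • (Γnp1 + Γn))
    (Qalg2 : Matrix (Fin n) (Fin n) ℝ)
    (hQ : Qalg2 = ((1 : ℝ)/2) • (St Cnp1 + St Cn) - S0 - μ • (Γmid - 1))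
    (hconst : Qalg2 = (η / Δt) • (Γnp1 - Γn)) :
    Upsilon μ St S0 Cnp1 Γnp1 - Upsilon μ St S0 Cnp1 Γmid +
      Upsilon μ St S0 Cn Γmid - Upsilon μ St S0 Cn Γn =
    -(Δt/2) * η * frob ((1/Δt) • (Γnp1 - Γn)) ((1/Δt) • (Γnp1 - Γn)) := by
  have key : frob (((1 : ℝ)/2) • (St Cnp1 + St Cn) - S0 - μ • (Γmid - 1)) (Γnp1 - Γn)
      = frob ((η / Δt) • (Γnp1 - Γn)) (Γnp1 - Γn) := by
    rw [← hQ, hconst]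
  have hrhs : -(Δt/2) * η * frob ((1/Δt) • (Γnp1 - Γn)) ((1/Δt) • (Γnp1 - Γn))
      = -(η/(2*Δt)) * frob (Γnp1 - Γn) (Γnp1 - Γn) := by
    rw [frob_smul_left, frob_smul_right]
    field_simp
  rw [hrhs]
  subst hΓmid
  have s1 : frob Γnp1 Γn = frob Γn Γnp1 := frob_comm _ _
  have s2 : frob Γnp1 (1 : Matrix (Fin n) (Fin n) ℝ) = frob 1 Γnp1 := frob_comm _ _
  have s3 : frob Γn (1 : Matrix (Fin n) (Fin n) ℝ) = frob 1 Γn := frob_comm _ _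
  simp only [Upsilon, frob_add_left, frob_add_right, frob_sub_left, frob_sub_right,
    frob_smul_left, frob_smul_right] at key ⊢
  linear_combination (-(1/2) : ℝ) * key + (μ/4) * s1 - (μ/4) * s2 + (μ/4) * s3
end

section
/- Consider sequences U_l, V_l in a real vector space generated by the Newton–Raphson corrector: U_{l+1} = U_l + (Δt/2) ΔV_l and V_{l+1} = V_l + ΔV_l for arbitrary increments ΔV_l, with initialization U_0 = Uₙ + Δt Vₙ and V_0 = Vₙ for given Uₙ, Vₙ and Δt > 0. Then the kinematic residual R_l := (U_l − Uₙ)/Δt − (V_l + Vₙ)/2 satisfies R_l = 0 for all l ≥ 0. -/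
theorem kinematic_residual_stays_zero {V : Type*} [AddCommGroup V] [Module ℝ V]
    (Δt : ℝ) (hΔt : 0 < Δt) (Un Vn : V) (U Vv ΔV : ℕ → V)
    (hU0 : U 0 = Un + Δt • Vn) (hV0 : Vv 0 = Vn)
    (hU : ∀ l, U (l + 1) = U l + (Δt / 2) • ΔV l)
    (hV : ∀ l, Vv (l + 1) = Vv l + ΔV l) :
    ∀ l, (1 / Δt) • (U l - Un) - ((1 : ℝ)/2) • (Vv l + Vn) = 0 := by
  have hne : Δt ≠ 0 := ne_of_gt hΔt
  intro l
  induction l with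
  | zero =>
    rw [hU0, hV0]
    rw [add_sub_cancel_left, smul_smul, one_div_mul_cancel hne, one_smul, smul_add]
    module
  | succ l ih =>
    rw [hU, hV]
    have : (1 / Δt) • ((Δt / 2) • ΔV l) = ((1:ℝ)/2) • ΔV l := by
      rw [smul_smul]
      congr 1
      field_simp
    calc (1 / Δt) • (U l + (Δt / 2) • ΔV l - Un) - ((1:ℝ)/2) • (Vv l + ΔV l + Vn)
        = ((1 / Δt) • (U l - Un) - ((1:ℝ)/2) • (Vv l + Vn))
          + ((1 / Δt) • ((Δt / 2) • ΔV l) - ((1:ℝ)/2) • ΔV l) := by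
          simp only [smul_add, smul_sub, sub_eq_add_neg]; rw [this]; abel
      _ = 0 := by rw [ih, this]; simp
end
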